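/- arXiv:1201.0141 — 2 statements merged into one kernel-verified Lean document; each statement's English description precedes it below -/
import Mathlib

section
/- For t > 0, the function u(x,t) = (√3/(2π)) · t/(x² + xt + t²) satisfies the third-order Laplace equation ∂³u/∂t³ + ∂³u/∂x³ = 0 for all x ∈ ℝ, t > 0. -/
/-! With `ζ₆ = e^{-iπ/3}` one has `x² + xt + t² = |x + ζ₆ t|²`, so the kernel is
`u(x, t) = Im g(x + ζ₆ t)` for the function `g z = 1 / (π z)`, holomorphic away from `0`.
Differentiating `g(x + ζ₆ t)` in `t` multiplies each derivative of `g` by `ζ₆`, in `x` by `1`;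
hence `∂ₜ³ u = Im (ζ₆³ g‴) = -Im g‴ = -∂ₓ³ u`. -/

open Real Filter Topology

theorem iteratedDeriv_clm_comp_affine {F : Type*} [NormedAddCommGroup F] [NormedSpace ℝ F]
    {g : ℂ → ℂ} {U : Set ℂ} (hU : IsOpen U) (hg : DifferentiableOn ℂ g U) (L : ℂ →L[ℝ] F)
    (a b : ℂ) (n : ℕ) {s : ℝ} (hs : a + b * s ∈ U) :
    iteratedDeriv n (fun s : ℝ => L (g (a + b * s))) s =
      L (b ^ n * iteratedDeriv n g (a + b * s)) := by
  induction n generalizing s with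
  | zero => simp
  | succ n ih =>
    have hV : IsOpen {s : ℝ | a + b * s ∈ U} := hU.preimage (by fun_prop)
    have heq : iteratedDeriv n (fun s : ℝ => L (g (a + b * s))) =ᶠ[𝓝 s]
        fun s : ℝ => L (b ^ n * iteratedDeriv n g (a + b * s)) :=
      eventually_of_mem (hV.mem_nhds hs) fun s' hs' => ih hs'
    have hD : HasDerivAt (iteratedDeriv n g) (iteratedDeriv (n + 1) g (a + b * s))
        (a + b * s) := by
      rw [iteratedDeriv_succ, iteratedDeriv_eq_iterate]
      exact ((hg.analyticOnNhd hU).iterated_deriv n _ hs).differentiableAt.hasDerivAt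
    have hA : HasDerivAt (fun s : ℝ => a + b * (s : ℂ)) b s := by
      simpa using ((hasDerivAt_id s).ofReal_comp.const_mul b).const_add a
    have hL : HasDerivAt (fun s : ℝ => L (b ^ n * iteratedDeriv n g (a + b * s)))
        (L (b ^ n * (iteratedDeriv (n + 1) g (a + b * s) * b))) s :=
      L.hasFDerivAt.comp_hasDerivAt s ((hD.comp s hA).const_mul (b ^ n))
    rw [iteratedDeriv_succ, heq.deriv_eq, hL.deriv]
    ring_nf

noncomputable def ζ₆ : ℂ := ⟨1 / 2, -(√3 / 2)⟩

theorem ζ₆_pow_three : ζ₆ ^ 3 = -1 := by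
  have h3 : √3 ^ 2 = 3 := sq_sqrt (by norm_num)
  apply Complex.ext <;> simp [ζ₆, pow_succ]
  · linear_combination (-3 / 8 : ℝ) * h3
  · linear_combination (√3 / 8 : ℝ) * h3

theorem ofReal_add_ζ₆_mul_ne_zero {y s : ℝ} (hs : s ≠ 0) : (y : ℂ) + ζ₆ * s ≠ 0 := by
  intro h
  have him := congrArg Complex.im h
  simp [ζ₆] at him
  tauto

theorem cauchy_kernel_eq_im (y s : ℝ) :
    √3 / (2 * π) * s / (y ^ 2 + y * s + s ^ 2) = ((π * (y + ζ₆ * s) : ℂ)⁻¹).im := by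
  have h3 : √3 ^ 2 = 3 := sq_sqrt (by norm_num)
  have hQ : Complex.normSq (y + ζ₆ * s) = y ^ 2 + y * s + s ^ 2 := by
    simp [Complex.normSq_apply, ζ₆]
    linear_combination (s ^ 2 / 4) * h3
  rw [Complex.inv_im, Complex.normSq_mul, hQ]
  simp [ζ₆]
  field_simp

theorem stmt_10 (x t : ℝ) (ht : 0 < t) :
    iteratedDeriv 3 (fun s : ℝ => Real.sqrt 3 / (2 * Real.pi) * s / (x ^ 2 + x * s + s ^ 2)) t
      + iteratedDeriv 3 (fun y : ℝ => Real.sqrt 3 / (2 * Real.pi) * t / (y ^ 2 + y * t + t ^ 2)) x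
    = 0 := by
  let g : ℂ → ℂ := fun z => (π * z)⁻¹
  have hg : DifferentiableOn ℂ g {0}ᶜ :=
    (differentiableOn_id.const_mul _).inv fun z hz =>
      mul_ne_zero (Complex.ofReal_ne_zero.2 pi_ne_zero) hz
  have hw : (x : ℂ) + ζ₆ * t ∈ ({0}ᶜ : Set ℂ) := ofReal_add_ζ₆_mul_ne_zero ht.ne'
  have hT : (fun s : ℝ => √3 / (2 * π) * s / (x ^ 2 + x * s + s ^ 2)) =
      fun s : ℝ => Complex.imCLM (g (x + ζ₆ * s)) :=
    funext fun s => cauchy_kernel_eq_im x s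
  have hX : (fun y : ℝ => √3 / (2 * π) * t / (y ^ 2 + y * t + t ^ 2)) =
      fun y : ℝ => Complex.imCLM (g (ζ₆ * t + 1 * y)) := by
    funext y
    rw [cauchy_kernel_eq_im, one_mul, add_comm]
    rfl
  rw [hT, hX, iteratedDeriv_clm_comp_affine isOpen_compl_singleton hg _ _ _ _ hw,
    iteratedDeriv_clm_comp_affine isOpen_compl_singleton hg _ _ _ _ (by rwa [one_mul, add_comm]),
    ζ₆_pow_three, one_mul, add_comm (ζ₆ * t)]
  simp
end

section
/- For every integer m ≥ 1, the Cauchy density f(x,t) = (1/π)·t·cos(π/2m) / ((x + t·sin(π/2m))² + t²·cos²(π/2m)) satisfies the second-order PDE ∂²f/∂t² + ∂²f/∂x² = 2·sin(π/2m)·∂²f/∂x∂t for all x ∈ ℝ, t > 0. -/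
/-!
Put `ω = sin θ + i cos θ` with `θ = π/(2m)`, a point of the unit circle. Then
`f(x,t) = -(1/π) Im (x + tω)⁻¹`, and on any function of `z = x + tω` we have `∂ₜ = ω ∂_z` and
`∂ₓ = ∂_z`, so `∂ₜ² + ∂ₓ² - 2 Re ω ∂ₓ∂ₜ` acts as `(ω² - 2 Re ω · ω + 1) ∂_z² = (ω - ω)(ω - ω̄) ∂_z²`,
which vanishes because `ω ω̄ = 1`. When `cos θ = 0` the density is identically zero.
-/

open Complex Filter Topology

theorem iteratedDeriv_two {𝕜 F : Type*} [NontriviallyNormedField 𝕜] [NormedAddCommGroup F]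
    [NormedSpace 𝕜 F] {f : 𝕜 → F} : iteratedDeriv 2 f = deriv (deriv f) := by
  rw [iteratedDeriv_succ, iteratedDeriv_one]

section LineZpow

variable {ℓ : ℝ → ℂ} {w κ : ℂ} {n : ℤ}

theorem hasDerivAt_im_mul_zpow {s : ℝ} (hℓ : HasDerivAt ℓ w s) (hs : ℓ s ≠ 0) :
    HasDerivAt (fun s => (κ * ℓ s ^ n).im) (κ * n * w * ℓ s ^ (n - 1)).im s := by
  have h := ((hasDerivAt_zpow n (ℓ s) (Or.inl hs)).comp s hℓ).const_mul κ
  exact (imCLM.hasFDerivAt.comp_hasDerivAt s h).congr_deriv (by rw [imCLM_apply]; ring_nf)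

theorem deriv_deriv_im_mul_zpow {t : ℝ} (hℓ : ∀ s, HasDerivAt ℓ w s)
    (ht : ∀ᶠ s in 𝓝 t, ℓ s ≠ 0) :
    deriv (deriv fun s => (κ * ℓ s ^ n).im) t
      = (κ * n * (n - 1) * w ^ 2 * ℓ t ^ (n - 2)).im := by
  have hderiv : deriv (fun s => (κ * ℓ s ^ n).im) =ᶠ[𝓝 t]
      fun s => ((κ * n * w) * ℓ s ^ (n - 1)).im :=
    ht.mono fun s hs => (hasDerivAt_im_mul_zpow (hℓ s) hs).deriv
  rw [hderiv.deriv_eq, (hasDerivAt_im_mul_zpow (hℓ t) ht.self_of_nhds).deriv, sub_sub,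
    one_add_one_eq_two]
  congr 1
  push_cast
  ring

end LineZpow

theorem hasDerivAt_add_ofReal_mul (z w : ℂ) (s : ℝ) :
    HasDerivAt (fun s : ℝ => z + s * w) w s := by
  simpa using ((hasDerivAt_id s).ofReal_comp.mul_const w).const_add z

theorem hasDerivAt_ofReal_add (z : ℂ) (y : ℝ) : HasDerivAt (fun y : ℝ => (y : ℂ) + z) 1 y := by
  simpa using (hasDerivAt_id y).ofReal_comp.add_const z

theorem ofReal_add_ofReal_mul_ne_zero {ω : ℂ} (hω : ω.im ≠ 0) (y : ℝ) {s : ℝ} (hs : s ≠ 0) :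
    (y : ℂ) + s * ω ≠ 0 := fun h => mul_ne_zero hs hω (by simpa using congrArg Complex.im h)

theorem sq_add_one_eq_two_re_mul {ω : ℂ} (hω : ‖ω‖ = 1) : ω ^ 2 + 1 = 2 * ω.re * ω := by
  have h : ω.re * ω.re + ω.im * ω.im = 1 := by
    rw [← normSq_apply, ← Complex.sq_norm, hω, one_pow]
  apply Complex.ext <;> simp [sq] <;> linarith

theorem im_mul_zpow_line_pde (κ ω : ℂ) (n : ℤ) (hω : ‖ω‖ = 1) (hω_im : ω.im ≠ 0) (x : ℝ)
    {t : ℝ} (ht : t ≠ 0) :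
    iteratedDeriv 2 (fun s : ℝ => (κ * (x + s * ω) ^ n).im) t
      + iteratedDeriv 2 (fun y : ℝ => (κ * (y + t * ω) ^ n).im) x
    = 2 * ω.re * deriv (fun y : ℝ => deriv (fun s : ℝ => (κ * (y + s * ω) ^ n).im) t) x := by
  have hmixed : (fun y : ℝ => deriv (fun s : ℝ => (κ * (y + s * ω) ^ n).im) t)
      = fun y : ℝ => ((κ * n * ω) * (y + t * ω) ^ (n - 1)).im :=
    funext fun y => (hasDerivAt_im_mul_zpow (hasDerivAt_add_ofReal_mul y ω t)
      (ofReal_add_ofReal_mul_ne_zero hω_im y ht)).deriv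
  rw [iteratedDeriv_two, iteratedDeriv_two,
    deriv_deriv_im_mul_zpow (hasDerivAt_add_ofReal_mul x ω)
      ((eventually_ne_nhds ht).mono fun s hs => ofReal_add_ofReal_mul_ne_zero hω_im x hs),
    deriv_deriv_im_mul_zpow (hasDerivAt_ofReal_add (t * ω))
      (Eventually.of_forall fun y => ofReal_add_ofReal_mul_ne_zero hω_im y ht),
    hmixed, (hasDerivAt_im_mul_zpow (hasDerivAt_ofReal_add (t * ω) x)
      (ofReal_add_ofReal_mul_ne_zero hω_im x ht)).deriv, sub_sub, one_add_one_eq_two,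
    ← add_im, ← im_ofReal_mul]
  congr 1
  push_cast
  linear_combination (κ * n * (n - 1) * (x + t * ω) ^ (n - 2)) * sq_add_one_eq_two_re_mul hω

theorem mul_div_sq_add_sq_eq_im_mul_zpow (K a c y s : ℝ) :
    K * (s * c) / ((y + s * a) ^ 2 + s ^ 2 * c ^ 2)
      = (-(K : ℂ) * (y + s * ⟨a, c⟩) ^ (-1 : ℤ)).im := by
  simp [inv_im, normSq_apply]
  ring

theorem stmt_13_general (m : ℕ) (x t : ℝ) (ht : 0 < t) :
    iteratedDeriv 2
        (fun s : ℝ => (1 / Real.pi) * (s * Real.cos (Real.pi / (2 * m))) /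
          ((x + s * Real.sin (Real.pi / (2 * m))) ^ 2 + s ^ 2 * Real.cos (Real.pi / (2 * m)) ^ 2)) t
      + iteratedDeriv 2
        (fun y : ℝ => (1 / Real.pi) * (t * Real.cos (Real.pi / (2 * m))) /
          ((y + t * Real.sin (Real.pi / (2 * m))) ^ 2 + t ^ 2 * Real.cos (Real.pi / (2 * m)) ^ 2)) x
    = 2 * Real.sin (Real.pi / (2 * m)) *
        deriv (fun y : ℝ =>
          deriv (fun s : ℝ => (1 / Real.pi) * (s * Real.cos (Real.pi / (2 * m))) /
            ((y + s * Real.sin (Real.pi / (2 * m))) ^ 2 + s ^ 2 * Real.cos (Real.pi / (2 * m)) ^ 2)) t) x := by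
  set θ := Real.pi / (2 * m)
  by_cases hc : Real.cos θ = 0
  · simp [hc]
  have hω : ‖(⟨Real.sin θ, Real.cos θ⟩ : ℂ)‖ = 1 := by
    rw [norm_def, Real.sqrt_eq_one, normSq_mk]
    simpa [sq] using Real.sin_sq_add_cos_sq θ
  simp only [mul_div_sq_add_sq_eq_im_mul_zpow]
  exact im_mul_zpow_line_pde _ _ (-1) hω hc x ht.ne'

theorem stmt_13 (m : ℕ) (hm : 1 ≤ m) (x t : ℝ) (ht : 0 < t) :
    iteratedDeriv 2
        (fun s : ℝ => (1 / Real.pi) * (s * Real.cos (Real.pi / (2 * m))) /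
          ((x + s * Real.sin (Real.pi / (2 * m))) ^ 2 + s ^ 2 * Real.cos (Real.pi / (2 * m)) ^ 2)) t
      + iteratedDeriv 2
        (fun y : ℝ => (1 / Real.pi) * (t * Real.cos (Real.pi / (2 * m))) /
          ((y + t * Real.sin (Real.pi / (2 * m))) ^ 2 + t ^ 2 * Real.cos (Real.pi / (2 * m)) ^ 2)) x
    = 2 * Real.sin (Real.pi / (2 * m)) *
        deriv (fun y : ℝ =>
          deriv (fun s : ℝ => (1 / Real.pi) * (s * Real.cos (Real.pi / (2 * m))) /
            ((y + s * Real.sin (Real.pi / (2 * m))) ^ 2 + s ^ 2 * Real.cos (Real.pi / (2 * m)) ^ 2)) t) x :=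
  stmt_13_general m x t ht
end
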